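/- Fix ℓ ≥ 1 and complex numbers k₁, …, k_ℓ with k₁ + ⋯ + k_ℓ = 0. Then for every n ≥ ℓ, the polynomial P_n = ∑_{i₁+⋯+i_ℓ = n, iⱼ ≥ 1} k₁^{i₁}⋯k_ℓ^{i_ℓ} x_{i₁}⋯x_{i_ℓ} satisfies d(P_n) = 0, i.e. P_n is an Atiyah–Segal invariant polynomial. -/

import Mathlib

/-!
Differentiating `x_{i₁}⋯x_{i_ℓ}` lowers one index `i_j ≥ 2` by one, and the weight
`k₁^{i₁}⋯k_ℓ^{i_ℓ}` then splits off a factor `k_j`. Since lowering the `j`-th index is a bijection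
from the positive tuples of sum `n + 1` with `i_j ≥ 2` onto the positive tuples of sum `n`, this
gives `d(P_{n+1}) = (k₁ + ⋯ + k_ℓ) P_n`.
-/

open MvPolynomial

noncomputable def x (i : ℕ) : MvPolynomial ℕ ℂ := X (i - 1)

/-- `P ℓ k n = ∑ k₁^{i₁}⋯k_ℓ^{i_ℓ} x_{i₁}⋯x_{i_ℓ}`, summed over tuples of
positive integers `(i₁,…,i_ℓ)` with `i₁+⋯+i_ℓ = n` (so `P ℓ k n = 0` if `n < ℓ`). -/
noncomputable def P (ℓ : ℕ) (k : Fin ℓ → ℂ) (n : ℕ) : MvPolynomial ℕ ℂ :=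
  ∑ i ∈ Finset.filter (fun i : Fin ℓ → ℕ => (∀ j, 1 ≤ i j) ∧ ∑ j, i j = n)
      (Fintype.piFinset fun _ => Finset.range (n + 1)),
    C (∏ j, k j ^ i j) * ∏ j, x (i j)

open Finset

theorem Derivation.leibniz_prod {R A M ι : Type*} [CommSemiring R] [CommSemiring A] [Algebra R A]
    [AddCommMonoid M] [Module A M] [Module R M] [DecidableEq ι] (D : Derivation R A M)
    (s : Finset ι) (f : ι → A) :
    D (∏ i ∈ s, f i) = ∑ i ∈ s, (∏ j ∈ s.erase i, f j) • D (f i) := by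
  induction s using Finset.induction_on with
  | empty => simp
  | insert a s ha ih =>
    rw [prod_insert ha, D.leibniz, ih, sum_insert ha, erase_insert ha, smul_sum, add_comm]
    congr 1
    refine sum_congr rfl fun i hi => ?_
    rw [erase_insert_of_ne (ne_of_mem_of_not_mem hi ha).symm,
      prod_insert fun h => ha (mem_of_mem_erase h), mul_smul]

section

variable {ι : Type*} [Fintype ι] [DecidableEq ι]

variable (ι) in
def posTuples (n : ℕ) : Finset (ι → ℕ) :=
  filter (fun i => (∀ j, 1 ≤ i j) ∧ ∑ j, i j = n) (Fintype.piFinset fun _ => range (n + 1))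

theorem mem_posTuples {n : ℕ} {i : ι → ℕ} :
    i ∈ posTuples ι n ↔ (∀ j, 1 ≤ i j) ∧ ∑ j, i j = n := by
  rw [posTuples, mem_filter, Fintype.mem_piFinset, and_iff_right_iff_imp]
  rintro ⟨-, rfl⟩ j
  exact mem_range_succ_iff.2 (single_le_sum (fun m _ => Nat.zero_le (i m)) (mem_univ j))

theorem filter_posTuples_succ (n : ℕ) (j : ι) :
    {i ∈ posTuples ι (n + 1) | 2 ≤ i j} =
      (posTuples ι n).map (addRightEmbedding (Pi.single j 1)) := by
  ext i
  simp only [mem_filter, mem_map, mem_posTuples, addRightEmbedding_apply]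
  constructor
  · rintro ⟨⟨hpos, hsum⟩, hj⟩
    have hadd : i - Pi.single j 1 + Pi.single j 1 = i := by
      funext m
      rcases eq_or_ne m j with rfl | hm
      · simp only [Pi.sub_apply, Pi.add_apply, Pi.single_eq_same]
        omega
      · simp [hm]
    refine ⟨i - Pi.single j 1, ⟨fun m => ?_, ?_⟩, hadd⟩
    · rcases eq_or_ne m j with rfl | hm
      · simp only [Pi.sub_apply, Pi.single_eq_same]
        omega
      · simpa [hm] using hpos m
    · rw [← hadd] at hsum
      simpa [sum_add_distrib] using hsum
  · rintro ⟨i, ⟨hpos, rfl⟩, rfl⟩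
    refine ⟨⟨fun m => le_add_right (hpos m), ?_⟩, ?_⟩
    · simp [sum_add_distrib]
    · simpa using hpos j

noncomputable def weightedMonomial (k : ι → ℂ) (i : ι → ℕ) : MvPolynomial ℕ ℂ :=
  ∏ j, k j ^ i j • x (i j)

theorem P_eq_sum_weightedMonomial (ℓ : ℕ) (k : Fin ℓ → ℂ) (n : ℕ) :
    P ℓ k n = ∑ i ∈ posTuples (Fin ℓ) n, weightedMonomial k i := by
  rw [P, posTuples]
  refine sum_congr (by congr!) fun i _ => ?_
  simp only [weightedMonomial, smul_eq_C_mul, prod_mul_distrib, map_prod]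

variable (d : Derivation ℂ (MvPolynomial ℕ ℂ) (MvPolynomial ℕ ℂ))

theorem d_pow_smul_x (h1 : d (x 1) = 0) (h : ∀ i, 2 ≤ i → d (x i) = x (i - 1)) (c : ℂ)
    {a : ℕ} (ha : 1 ≤ a) :
    d (c ^ a • x a) = if 2 ≤ a then c • c ^ (a - 1) • x (a - 1) else 0 := by
  rw [d.map_smul]
  split_ifs with h2
  · rw [h a h2, smul_smul, ← pow_succ', Nat.sub_add_cancel ha]
  · rw [show a = 1 by omega, h1, smul_zero]

theorem d_weightedMonomial (h1 : d (x 1) = 0) (h : ∀ i, 2 ≤ i → d (x i) = x (i - 1))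
    (k : ι → ℂ) {i : ι → ℕ} (hi : ∀ j, 1 ≤ i j) :
    d (weightedMonomial k i) =
      ∑ j, if 2 ≤ i j then k j • weightedMonomial k (i - Pi.single j 1) else 0 := by
  rw [weightedMonomial, d.leibniz_prod]
  refine sum_congr rfl fun j _ => ?_
  rw [d_pow_smul_x d h1 h _ (hi j)]
  split_ifs
  · set i' : ι → ℕ := i - Pi.single j 1
    have hoff : ∀ m ∈ univ.erase j, i' m = i m := fun m hm => by
      simp [i', ne_of_mem_erase hm]
    have hj : i' j = i j - 1 := by simp [i']
    rw [weightedMonomial, ← prod_erase_mul _ _ (mem_univ j), hj,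
      prod_congr rfl fun m hm => by rw [← hoff m hm], smul_eq_mul, mul_smul_comm]
  · rw [smul_zero]

theorem d_sum_weightedMonomial_posTuples_succ (h1 : d (x 1) = 0)
    (h : ∀ i, 2 ≤ i → d (x i) = x (i - 1)) (k : ι → ℂ) (n : ℕ) :
    d (∑ i ∈ posTuples ι (n + 1), weightedMonomial k i) =
      (∑ j, k j) • ∑ i ∈ posTuples ι n, weightedMonomial k i := by
  rw [map_sum, sum_congr rfl fun i hi => d_weightedMonomial d h1 h k (mem_posTuples.1 hi).1,
    sum_comm, sum_smul]
  refine sum_congr rfl fun j _ => ?_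
  rw [← sum_filter, filter_posTuples_succ, sum_map, smul_sum]
  simp

theorem d_P_succ (h1 : d (x 1) = 0) (h : ∀ i, 2 ≤ i → d (x i) = x (i - 1)) (ℓ : ℕ)
    (k : Fin ℓ → ℂ) (n : ℕ) : d (P ℓ k (n + 1)) = (∑ j, k j) • P ℓ k n := by
  simp only [P_eq_sum_weightedMonomial, d_sum_weightedMonomial_posTuples_succ d h1 h]

end

/-- If `k₁+⋯+k_ℓ = 0` then `P_n` is an Atiyah–Segal invariant polynomial: `d(P_n) = 0`. -/
theorem d_P_eq_zero (d : Derivation ℂ (MvPolynomial ℕ ℂ) (MvPolynomial ℕ ℂ))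
    (h1 : d (x 1) = 0) (h : ∀ i, 2 ≤ i → d (x i) = x (i - 1))
    (ℓ : ℕ) (hℓ : 1 ≤ ℓ) (k : Fin ℓ → ℂ) (hk : ∑ j, k j = 0) (n : ℕ) (hn : ℓ ≤ n) :
    d (P ℓ k n) = 0 := by
  obtain ⟨m, rfl⟩ : ∃ m, n = m + 1 := ⟨n - 1, by omega⟩
  rw [d_P_succ d h1 h, hk, zero_smul]
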